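/- Let g be the Heisenberg Lie bialgebra (ℂ-basis x, y, h; [x,y] = h; δ_g(h) = 0, δ_g(x) = y∧h, δ_g(y) = h∧x). For a flag datum (0, D, kh, B) with B = e₁ x∧y + e₂ y∧h + e₃ h∧x and D a derivation whose matrix in the basis (x,y,h) has entries D(x) = a₁x + a₂y, D(y) = b₁x + b₂y, D(h) = (a₁+b₂)h, the flag-datum compatibility conditions are equivalent to: a₁k + e₁ − a₂ − b₁ = 0, a₂k − 2b₂ = 0, b₂k + e₁ + b₁ + a₂ = 0, b₁k + 2a₁ = 0, and ke₁ = 0. In particular, if k = 0 then e₁ = a₁ = b₂ = 0 and a₂ = −b₁; and if k ∉ {0, ±2√−1} then additionally a₂ = b₁ = 0. -/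

import Mathlib

open TensorProduct LinearMap

noncomputable section

/-- The flip `A ⊗ B → B ⊗ A`. -/
def flipT (k A B : Type*) [Field k] [AddCommGroup A] [Module k A]
    [AddCommGroup B] [Module k B] : A ⊗[k] B →ₗ[k] B ⊗[k] A :=
  (TensorProduct.comm k A B).toLinearMap

/-- Swap of the first two tensor factors `A ⊗ (B ⊗ C) → B ⊗ (A ⊗ C)`. -/
def swap12 (k A B C : Type*) [Field k] [AddCommGroup A] [Module k A]
    [AddCommGroup B] [Module k B] [AddCommGroup C] [Module k C] :
    A ⊗[k] (B ⊗[k] C) →ₗ[k] B ⊗[k] (A ⊗[k] C) :=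
  (TensorProduct.assoc k B A C).toLinearMap ∘ₗ
    rTensor C (flipT k A B) ∘ₗ (TensorProduct.assoc k A B C).symm.toLinearMap

/-- Associator as a linear map. -/
def asr (k A B C : Type*) [Field k] [AddCommGroup A] [Module k A]
    [AddCommGroup B] [Module k B] [AddCommGroup C] [Module k C] :
    (A ⊗[k] B) ⊗[k] C →ₗ[k] A ⊗[k] (B ⊗[k] C) :=
  (TensorProduct.assoc k A B C).toLinearMap

/-- `δ : M → M ⊗ M` is a Lie coalgebra structure: anti-cocommutativity and co-Jacobi. -/
def IsLieCoalgebra {k M : Type*} [Field k] [AddCommGroup M] [Module k M]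
    (δ : M →ₗ[k] M ⊗[k] M) : Prop :=
  (∀ m, flipT k M M (δ m) = - δ m) ∧
  (∀ m, lTensor M δ (δ m) - swap12 k M M M (lTensor M δ (δ m)) =
      asr k M M M (rTensor M δ (δ m)))

/-- A (bilinear) map `b` is a Lie bracket: alternating and Jacobi (in Leibniz form). -/
def IsLieBracket {k L : Type*} [Field k] [AddCommGroup L] [Module k L]
    (b : L →ₗ[k] L →ₗ[k] L) : Prop :=
  (∀ a, b a a = 0) ∧ (∀ a c d, b a (b c d) = b (b a c) d + b c (b a d))

/-- The adjoint action of `a` on `L ⊗ L`: `a.(Σ b₁⊗b₂) = Σ [a,b₁]⊗b₂ + b₁⊗[a,b₂]`. -/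
def adT {k L : Type*} [Field k] [AddCommGroup L] [Module k L]
    (b : L →ₗ[k] L →ₗ[k] L) (a : L) : L ⊗[k] L →ₗ[k] L ⊗[k] L :=
  rTensor L (b a) + lTensor L (b a)

/-- `(L, b, δ)` is a Lie bialgebra. -/
def IsLieBialgebra {k L : Type*} [Field k] [AddCommGroup L] [Module k L]
    (b : L →ₗ[k] L →ₗ[k] L) (δ : L →ₗ[k] L ⊗[k] L) : Prop :=
  IsLieBracket b ∧ IsLieCoalgebra δ ∧
    ∀ a c, δ (b a c) = adT b a (δ c) - adT b c (δ a)

variable {k g V : Type*} [Field k] [CharZero k]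
  [AddCommGroup g] [Module k g] [AddCommGroup V] [Module k V]

/-- The unified co-product map on `E = g ⊕ V`:
`δ_E(a + x) = δ_g(a) + Δ_E(x) − τΔ_E(x) + Δ_V(x) + δ_V(x)`. -/
def uniCoprod (δg : g →ₗ[k] g ⊗[k] g) (ΔE : V →ₗ[k] g ⊗[k] V)
    (ΔV : V →ₗ[k] g ⊗[k] g) (δV : V →ₗ[k] V ⊗[k] V) :
    (g × V) →ₗ[k] (g × V) ⊗[k] (g × V) :=
  map (inl k g V) (inl k g V) ∘ₗ δg ∘ₗ fst k g V +
    (map (inl k g V) (inr k g V) ∘ₗ ΔE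
      - map (inr k g V) (inl k g V) ∘ₗ flipT k g V ∘ₗ ΔE
      + map (inl k g V) (inl k g V) ∘ₗ ΔV
      + map (inr k g V) (inr k g V) ∘ₗ δV) ∘ₗ snd k g V

/-- Conditions (CLE1)–(CLE5): `(Δ_E, Δ_V, δ_V)` is a Lie coalgebraic extending
structure of `(g, δ_g)` by `V`. -/
def IsCoalgExtStructure (δg : g →ₗ[k] g ⊗[k] g) (ΔE : V →ₗ[k] g ⊗[k] V)
    (ΔV : V →ₗ[k] g ⊗[k] g) (δV : V →ₗ[k] V ⊗[k] V) : Prop :=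
  -- (CLE1)
  (∀ x, flipT k g g (ΔV x) = - ΔV x) ∧ (∀ x, flipT k V V (δV x) = - δV x) ∧
  -- (CLE2)
  (∀ x, lTensor g ΔV (ΔE x) + lTensor g δg (ΔV x)
      - swap12 k g g g (lTensor g ΔV (ΔE x)) - swap12 k g g g (lTensor g δg (ΔV x)) =
      - asr k g g g (rTensor g ΔV (flipT k g V (ΔE x)))
      + asr k g g g (rTensor g δg (ΔV x))) ∧
  -- (CLE3)
  (∀ x, lTensor g ΔE (ΔE x) - swap12 k g g V (lTensor g ΔE (ΔE x)) =
      asr k g g V (rTensor V δg (ΔE x)) + asr k g g V (rTensor V ΔV (δV x))) ∧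
  -- (CLE4)
  (∀ x, lTensor g δV (ΔE x) - swap12 k V g V (lTensor V ΔE (δV x)) =
      asr k g V V (rTensor V ΔE (δV x))) ∧
  -- (CLE5)
  (∀ x, lTensor V δV (δV x) - swap12 k V V V (lTensor V δV (δV x)) =
      asr k V V V (rTensor V δV (δV x)))

end
noncomputable section
variable {k g : Type*} [Field k] [CharZero k] [AddCommGroup g] [Module k g]

/-- A flag datum `(α, D, A, B)` of the Lie bialgebra `(g, [·,·], δ_g)`. -/
def IsFlagDatum (gbr : g →ₗ[k] g →ₗ[k] g) (δg : g →ₗ[k] g ⊗[k] g)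
    (α : g →ₗ[k] k) (D : g →ₗ[k] g) (A : g) (B : g ⊗[k] g) : Prop :=
  -- B ∈ g ∧ g
  flipT k g g B = - B ∧
  -- (1)
  (∀ a b, α (gbr a b) = 0) ∧ δg A = 0 ∧
  (∀ a, gbr a A = TensorProduct.rid k g (lTensor g α (δg a))) ∧
  -- (2)
  (∀ a b, D (gbr a b) = gbr (D a) b + gbr a (D b) + α a • D b - α b • D a) ∧
  -- (3)
  (A ⊗ₜ[k] B - swap12 k g g g (A ⊗ₜ[k] B) + asr k g g g (B ⊗ₜ[k] A)
      + lTensor g δg B - swap12 k g g g (lTensor g δg B)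
      - asr k g g g (rTensor g δg B) = 0) ∧
  -- (4)
  (∀ a, D a ⊗ₜ[k] A - A ⊗ₜ[k] D a + α a • B + adT gbr a B + δg (D a)
      - rTensor g D (δg a) - lTensor g D (δg a) = 0)

/-- Equivalence of flag datums: `α = α'`, `A = A'`, and there are `U ∈ g`,
`β ∈ k*` with `D(a) = [U,a] + βD'(a) − α(a)U` and
`B = δ_g(U) + βB' + U⊗A − A⊗U`. -/
def FlagEquiv (gbr : g →ₗ[k] g →ₗ[k] g) (δg : g →ₗ[k] g ⊗[k] g)
    (α : g →ₗ[k] k) (D : g →ₗ[k] g) (A : g) (B : g ⊗[k] g)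
    (α' : g →ₗ[k] k) (D' : g →ₗ[k] g) (A' : g) (B' : g ⊗[k] g) : Prop :=
  α = α' ∧ A = A' ∧ ∃ (U : g) (β : k), β ≠ 0 ∧
    (∀ a, D a = gbr U a + β • D' a - α a • U) ∧
    B = δg U + β • B' + U ⊗ₜ[k] A - A ⊗ₜ[k] U

end
noncomputable section

/-- The 3-dimensional Heisenberg Lie algebra, as `ℂ³` with coordinates the
coefficients of the basis `(x, y, h)`. -/
abbrev Heis : Type := ℂ × ℂ × ℂ

namespace Heis

def X : Heis := (1, 0, 0)
def Y : Heis := (0, 1, 0)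
def H : Heis := (0, 0, 1)

/-- The Heisenberg bracket: `[x,y] = h`, `[h,x] = [h,y] = 0`. -/
def hbr : Heis →ₗ[ℂ] Heis →ₗ[ℂ] Heis :=
  LinearMap.mk₂ ℂ (fun p q => (0, 0, p.1 * q.2.1 - p.2.1 * q.1))
    (by intros; simp [Prod.ext_iff]; ring)
    (by intros; simp [Prod.ext_iff]; ring)
    (by intros; simp [Prod.ext_iff]; ring)
    (by intros; simp [Prod.ext_iff]; ring)

/-- First coordinate (coefficient of `x`). -/
def c₁ : Heis →ₗ[ℂ] ℂ := LinearMap.fst ℂ ℂ (ℂ × ℂ)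
/-- Second coordinate (coefficient of `y`). -/
def c₂ : Heis →ₗ[ℂ] ℂ := LinearMap.fst ℂ ℂ ℂ ∘ₗ LinearMap.snd ℂ ℂ (ℂ × ℂ)
/-- Third coordinate (coefficient of `h`). -/
def c₃ : Heis →ₗ[ℂ] ℂ := LinearMap.snd ℂ ℂ ℂ ∘ₗ LinearMap.snd ℂ ℂ (ℂ × ℂ)

/-- The co-bracket: `δ(h) = 0`, `δ(x) = y∧h`, `δ(y) = h∧x`,
where `u∧v = u⊗v − v⊗u`. -/
def hδ : Heis →ₗ[ℂ] Heis ⊗[ℂ] Heis :=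
  c₁.smulRight (Y ⊗ₜ[ℂ] H - H ⊗ₜ[ℂ] Y) + c₂.smulRight (H ⊗ₜ[ℂ] X - X ⊗ₜ[ℂ] H)

end Heis
end
noncomputable section
open Heis

/-- The derivation with matrix `D(x) = a₁x + a₂y`, `D(y) = b₁x + b₂y`,
`D(h) = (a₁+b₂)h`. -/
def heisD (a₁ a₂ b₁ b₂ : ℂ) : Heis →ₗ[ℂ] Heis :=
  c₁.smulRight (a₁ • X + a₂ • Y) + c₂.smulRight (b₁ • X + b₂ • Y) +
    c₃.smulRight ((a₁ + b₂) • H)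

/-- `B = e₁ x∧y + e₂ y∧h + e₃ h∧x`. -/
def heisB (e₁ e₂ e₃ : ℂ) : Heis ⊗[ℂ] Heis :=
  e₁ • (X ⊗ₜ[ℂ] Y - Y ⊗ₜ[ℂ] X) + e₂ • (Y ⊗ₜ[ℂ] H - H ⊗ₜ[ℂ] Y) +
    e₃ • (H ⊗ₜ[ℂ] X - X ⊗ₜ[ℂ] H)


/-! With `α = 0` and `A = c h`, condition (1) holds because `h` is central and `δ(h) = 0`,
`heisD` is a derivation and `heisB` is skew, so only (3) and (4) carry information.
Condition (3) reduces to `c e₁ = 0`. Condition (4) is linear in `a` and vanishes at `h`;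
at `x` and `y` it is a combination of `x∧h` and `y∧h` whose coefficients are the four
remaining equations. -/

section FlagDatum

variable {k g : Type*} [Field k] [AddCommGroup g] [Module k g]

def flagCond3 (δg : g →ₗ[k] g ⊗[k] g) (A : g) (B : g ⊗[k] g) : g ⊗[k] (g ⊗[k] g) :=
  A ⊗ₜ[k] B - swap12 k g g g (A ⊗ₜ[k] B) + asr k g g g (B ⊗ₜ[k] A)
    + lTensor g δg B - swap12 k g g g (lTensor g δg B) - asr k g g g (rTensor g δg B)

/-- Condition (4) for `α = 0`, bundled as a linear map in `a` so that it can be checked on a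
basis. -/
def flagCond4 (gbr : g →ₗ[k] g →ₗ[k] g) (δg : g →ₗ[k] g ⊗[k] g) (D : g →ₗ[k] g) (A : g)
    (B : g ⊗[k] g) : g →ₗ[k] g ⊗[k] g :=
  (TensorProduct.mk k g g).flip A ∘ₗ D - TensorProduct.mk k g g A ∘ₗ D
    + (rTensorHom g ∘ₗ gbr + lTensorHom g ∘ₗ gbr).flip B + δg ∘ₗ D
    - rTensor g D ∘ₗ δg - lTensor g D ∘ₗ δg

theorem isFlagDatum_zero_iff [CharZero k] (gbr : g →ₗ[k] g →ₗ[k] g) (δg : g →ₗ[k] g ⊗[k] g)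
    (D : g →ₗ[k] g) (A : g) (B : g ⊗[k] g) :
    IsFlagDatum gbr δg 0 D A B ↔
      flipT k g g B = -B ∧ δg A = 0 ∧ (∀ a, gbr a A = 0) ∧
        (∀ a b, D (gbr a b) = gbr (D a) b + gbr a (D b)) ∧
        flagCond3 δg A B = 0 ∧ flagCond4 gbr δg D A B = 0 := by
  simp [IsFlagDatum, flagCond3, flagCond4, LinearMap.ext_iff, adT]

end FlagDatum

theorem e₁_a₁_b₂_eq_zero_of_flag_equations {K : Type*} [Field K] [CharZero K]
    {c a₁ a₂ b₁ b₂ e₁ : K} (h₁ : a₁ * c + e₁ - a₂ - b₁ = 0) (h₂ : a₂ * c - 2 * b₂ = 0)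
    (h₃ : b₂ * c + e₁ + b₁ + a₂ = 0) (h₄ : b₁ * c + 2 * a₁ = 0) (hc : c = 0) :
    e₁ = 0 ∧ a₁ = 0 ∧ b₂ = 0 ∧ a₂ = -b₁ := by
  subst hc
  exact ⟨by linear_combination (h₁ + h₃) / 2, by linear_combination h₄ / 2,
    by linear_combination -h₂ / 2, by linear_combination (h₃ - h₁) / 2⟩

theorem a₂_b₁_eq_zero_of_flag_equations {K : Type*} [Field K]
    {c a₁ a₂ b₁ b₂ e₁ : K} (h₁ : a₁ * c + e₁ - a₂ - b₁ = 0) (h₂ : a₂ * c - 2 * b₂ = 0)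
    (h₃ : b₂ * c + e₁ + b₁ + a₂ = 0) (h₄ : b₁ * c + 2 * a₁ = 0) (h₅ : c * e₁ = 0)
    (hc : c ≠ 0) (hc₄ : c ^ 2 + 4 ≠ 0) :
    a₂ = 0 ∧ b₁ = 0 := by
  have he₁ : e₁ = 0 := (mul_eq_zero.1 h₅).resolve_left hc
  have hA : a₂ * (c ^ 2 + 2) + 2 * b₁ = 0 := by linear_combination c * h₂ + 2 * h₃ - 2 * he₁
  have hB : b₁ * (c ^ 2 + 2) + 2 * a₂ = 0 := by linear_combination c * h₄ - 2 * h₁ + 2 * he₁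
  -- the linear system `hA`, `hB` in `(a₂, b₁)` has determinant `(c² + 2)² - 4 = c²(c² + 4)`
  have hdet : c ^ 2 * (c ^ 2 + 4) ≠ 0 := mul_ne_zero (pow_ne_zero 2 hc) hc₄
  constructor
  · refine (mul_eq_zero.1 ?_).resolve_left hdet
    linear_combination (c ^ 2 + 2) * hA - 2 * hB
  · refine (mul_eq_zero.1 ?_).resolve_left hdet
    linear_combination (c ^ 2 + 2) * hB - 2 * hA

theorem Complex.sq_add_four_ne_zero {c : ℂ} (h₁ : c ≠ 2 * I) (h₂ : c ≠ -2 * I) :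
    c ^ 2 + 4 ≠ 0 := by
  have hfactor : c ^ 2 + 4 = (c - 2 * I) * (c - -2 * I) := by linear_combination 4 * I_sq
  rw [hfactor]
  exact mul_ne_zero (sub_ne_zero.2 h₁) (sub_ne_zero.2 h₂)

namespace Heis

lemma eq_smul_X_add (p : Heis) : p = p.1 • X + p.2.1 • Y + p.2.2 • H := by
  obtain ⟨p₁, p₂, p₃⟩ := p
  simp [X, Y, H]

lemma linearMap_eq_zero_iff {M : Type*} [AddCommGroup M] [Module ℂ M] (f : Heis →ₗ[ℂ] M) :
    f = 0 ↔ f X = 0 ∧ f Y = 0 ∧ f H = 0 := by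
  refine ⟨fun hf => by simp [hf], fun ⟨hX, hY, hH⟩ => LinearMap.ext fun p => ?_⟩
  rw [eq_smul_X_add p]
  simp [hX, hY, hH]

def tensorCoords : Heis ⊗[ℂ] Heis ≃ₗ[ℂ] Heis × Heis × Heis :=
  (TensorProduct.prodLeft ℂ ℂ ℂ (ℂ × ℂ) Heis).trans
    ((TensorProduct.lid ℂ Heis).prodCongr
      ((TensorProduct.prodLeft ℂ ℂ ℂ ℂ Heis).trans
        ((TensorProduct.lid ℂ Heis).prodCongr (TensorProduct.lid ℂ Heis))))

@[simp]
lemma tensorCoords_tmul (p q : Heis) :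
    tensorCoords (p ⊗ₜ q) = (p.1 • q, p.2.1 • q, p.2.2 • q) := by
  obtain ⟨p₁, p₂, p₃⟩ := p
  simp [tensorCoords]

def tensorCoords₃ : Heis ⊗[ℂ] (Heis ⊗[ℂ] Heis) ≃ₗ[ℂ]
    (Heis × Heis × Heis) × (Heis × Heis × Heis) × (Heis × Heis × Heis) :=
  (TensorProduct.prodLeft ℂ ℂ ℂ (ℂ × ℂ) (Heis ⊗[ℂ] Heis)).trans
    (((TensorProduct.lid ℂ _).trans tensorCoords).prodCongr
      ((TensorProduct.prodLeft ℂ ℂ ℂ ℂ (Heis ⊗[ℂ] Heis)).trans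
        (((TensorProduct.lid ℂ _).trans tensorCoords).prodCongr
          ((TensorProduct.lid ℂ _).trans tensorCoords))))

@[simp]
lemma tensorCoords₃_tmul (p : Heis) (t : Heis ⊗[ℂ] Heis) :
    tensorCoords₃ (p ⊗ₜ t) =
      (p.1 • tensorCoords t, p.2.1 • tensorCoords t, p.2.2 • tensorCoords t) := by
  obtain ⟨p₁, p₂, p₃⟩ := p
  simp [tensorCoords₃]

lemma hbr_apply_H (a : Heis) : hbr a H = 0 := by
  simp [hbr, H]

lemma hδ_H : hδ H = 0 := by
  simp [hδ, H, c₁, c₂]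

lemma flipT_heisB (e₁ e₂ e₃ : ℂ) : flipT ℂ Heis Heis (heisB e₁ e₂ e₃) = -heisB e₁ e₂ e₃ := by
  simp only [heisB, flipT, LinearEquiv.coe_coe, map_add, map_smul, map_sub, comm_tmul]
  module

lemma heisD_map_hbr (a₁ a₂ b₁ b₂ : ℂ) (a b : Heis) :
    heisD a₁ a₂ b₁ b₂ (hbr a b) =
      hbr (heisD a₁ a₂ b₁ b₂ a) b + hbr a (heisD a₁ a₂ b₁ b₂ b) := by
  simp [heisD, hbr, X, Y, H, c₁, c₂, c₃, Prod.ext_iff]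
  ring

lemma smul_add_smul_wedge_H_eq_zero_iff (u v : ℂ) :
    u • (X ⊗ₜ[ℂ] H - H ⊗ₜ X) + v • (Y ⊗ₜ[ℂ] H - H ⊗ₜ Y) = 0 ↔ u = 0 ∧ v = 0 := by
  rw [← tensorCoords.map_eq_zero_iff]
  simp +contextual [X, Y, H, Prod.ext_iff]

lemma flagCond3_heis_eq_zero_iff (c e₁ e₂ e₃ : ℂ) :
    flagCond3 hδ (c • H) (heisB e₁ e₂ e₃) = 0 ↔ c * e₁ = 0 := by
  rw [← tensorCoords₃.map_eq_zero_iff, mul_eq_zero, or_comm]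
  simp [flagCond3, heisB, hδ, X, Y, H, c₁, c₂, swap12, asr, flipT, tmul_add, tmul_sub,
    smul_tmul, add_tmul, sub_tmul, Prod.ext_iff]

lemma flagCond4_heis_X (c a₁ a₂ b₁ b₂ e₁ e₂ e₃ : ℂ) :
    flagCond4 hbr hδ (heisD a₁ a₂ b₁ b₂) (c • H) (heisB e₁ e₂ e₃) X =
      (a₁ * c + e₁ - a₂ - b₁) • (X ⊗ₜ H - H ⊗ₜ X) + (a₂ * c - 2 * b₂) • (Y ⊗ₜ H - H ⊗ₜ Y) := by
  apply tensorCoords.injective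
  simp [flagCond4, heisB, heisD, hδ, hbr, X, Y, H, c₁, c₂, c₃, Prod.ext_iff]
  and_intros <;> ring

lemma flagCond4_heis_Y (c a₁ a₂ b₁ b₂ e₁ e₂ e₃ : ℂ) :
    flagCond4 hbr hδ (heisD a₁ a₂ b₁ b₂) (c • H) (heisB e₁ e₂ e₃) Y =
      (b₁ * c + 2 * a₁) • (X ⊗ₜ H - H ⊗ₜ X) + (b₂ * c + e₁ + b₁ + a₂) • (Y ⊗ₜ H - H ⊗ₜ Y) := by
  apply tensorCoords.injective
  simp [flagCond4, heisB, heisD, hδ, hbr, X, Y, H, c₁, c₂, c₃, Prod.ext_iff]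
  and_intros <;> ring

lemma flagCond4_heis_H (c a₁ a₂ b₁ b₂ e₁ e₂ e₃ : ℂ) :
    flagCond4 hbr hδ (heisD a₁ a₂ b₁ b₂) (c • H) (heisB e₁ e₂ e₃) H = 0 := by
  apply tensorCoords.injective
  simp [flagCond4, heisB, heisD, hδ, hbr, X, Y, H, c₁, c₂, c₃, Prod.ext_iff]
  ring

theorem isFlagDatum_heis_iff (c a₁ a₂ b₁ b₂ e₁ e₂ e₃ : ℂ) :
    IsFlagDatum hbr hδ 0 (heisD a₁ a₂ b₁ b₂) (c • H) (heisB e₁ e₂ e₃) ↔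
      a₁ * c + e₁ - a₂ - b₁ = 0 ∧ a₂ * c - 2 * b₂ = 0 ∧
        b₂ * c + e₁ + b₁ + a₂ = 0 ∧ b₁ * c + 2 * a₁ = 0 ∧ c * e₁ = 0 := by
  simp only [isFlagDatum_zero_iff, flipT_heisB, map_smul, hδ_H, smul_zero, hbr_apply_H,
    heisD_map_hbr, flagCond3_heis_eq_zero_iff, linearMap_eq_zero_iff, flagCond4_heis_X,
    flagCond4_heis_Y, flagCond4_heis_H, smul_add_smul_wedge_H_eq_zero_iff, true_and,
    implies_true, and_true]
  tauto

end Heis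

/-- **Example (computation).** For the Heisenberg Lie bialgebra, the flag-datum
conditions for `(0, D, kh, B)` with `D` as above and `B = e₁x∧y + e₂y∧h + e₃h∧x`
are equivalent to the five scalar equations; in particular if `k = 0` then
`e₁ = a₁ = b₂ = 0` and `a₂ = −b₁`, and if `k ∉ {0, ±2√−1}` then additionally
`a₂ = b₁ = 0`. -/
theorem heisenberg_flagDatum_computation (c a₁ a₂ b₁ b₂ e₁ e₂ e₃ : ℂ) :
    (IsFlagDatum Heis.hbr Heis.hδ 0 (heisD a₁ a₂ b₁ b₂) (c • H)
        (heisB e₁ e₂ e₃) ↔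
      a₁ * c + e₁ - a₂ - b₁ = 0 ∧ a₂ * c - 2 * b₂ = 0 ∧
        b₂ * c + e₁ + b₁ + a₂ = 0 ∧ b₁ * c + 2 * a₁ = 0 ∧ c * e₁ = 0) ∧
    (IsFlagDatum Heis.hbr Heis.hδ 0 (heisD a₁ a₂ b₁ b₂) (c • H)
        (heisB e₁ e₂ e₃) → c = 0 →
      e₁ = 0 ∧ a₁ = 0 ∧ b₂ = 0 ∧ a₂ = -b₁) ∧
    (IsFlagDatum Heis.hbr Heis.hδ 0 (heisD a₁ a₂ b₁ b₂) (c • H)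
        (heisB e₁ e₂ e₃) → c ≠ 0 → c ≠ 2 * Complex.I → c ≠ -2 * Complex.I →
      a₂ = 0 ∧ b₁ = 0) := by
  have key := isFlagDatum_heis_iff c a₁ a₂ b₁ b₂ e₁ e₂ e₃
  refine ⟨key, fun h hc => ?_, fun h hc hcI hcI' => ?_⟩
  · obtain ⟨h₁, h₂, h₃, h₄, -⟩ := key.1 h
    exact e₁_a₁_b₂_eq_zero_of_flag_equations h₁ h₂ h₃ h₄ hc
  · obtain ⟨h₁, h₂, h₃, h₄, h₅⟩ := key.1 h
    exact a₂_b₁_eq_zero_of_flag_equations h₁ h₂ h₃ h₄ h₅ hc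
      (Complex.sq_add_four_ne_zero hcI hcI')

end
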